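/- Let I ⊆ k[x_1,…,x_n] be an ideal, ≺ a term order, and v ∈ C_≺(I). Then for every u ∈ ℝ^n, in_u(I) = in_v(I) if and only if in_u(g) = in_v(g) for every g in the reduced Gröbner basis G_≺(I). -/

import Mathlib

open MvPolynomial

/-- A term order on the monomials of `k[x_1,…,x_n]`, identified with exponent
vectors in `ℕ^n`: a strict total order with `1` smallest and compatible with
multiplication of monomials. -/
structure TermOrder (n : ℕ) : Type where
  lt : (Fin n →₀ ℕ) → (Fin n →₀ ℕ) → Prop
  irrefl : ∀ a, ¬ lt a a
  trans : ∀ a b c, lt a b → lt b c → lt a c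
  total : ∀ a b, a ≠ b → lt a b ∨ lt b a
  zero_lt : ∀ a, a ≠ 0 → lt 0 a
  add_right : ∀ a b c, lt a b → lt (a + c) (b + c)

variable {n : ℕ} {k : Type*} [Field k]

/-- The exponent of the `τ`-largest term of `f` (and `0` if `f = 0`). -/
noncomputable def TermOrder.leadExp (τ : TermOrder n) (f : MvPolynomial (Fin n) k) :
    Fin n →₀ ℕ :=
  letI := Classical.propDecidable (∃ α, α ∈ f.support ∧ ∀ β ∈ f.support, β ≠ α → τ.lt β α)
  if h : ∃ α, α ∈ f.support ∧ ∀ β ∈ f.support, β ≠ α → τ.lt β α then h.choose else 0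

/-- The initial term `in_τ(f)` : the `τ`-largest term of `f` (with coefficient). -/
noncomputable def TermOrder.initialTerm (τ : TermOrder n) (f : MvPolynomial (Fin n) k) :
    MvPolynomial (Fin n) k :=
  monomial (τ.leadExp f) (f.coeff (τ.leadExp f))

/-- The initial ideal `in_τ(I) = ⟨in_τ(f) : f ∈ I \ {0}⟩`. -/
noncomputable def TermOrder.initialIdeal (τ : TermOrder n) (I : Ideal (MvPolynomial (Fin n) k)) :
    Ideal (MvPolynomial (Fin n) k) :=
  Ideal.span {p | ∃ f ∈ I, f ≠ 0 ∧ p = τ.initialTerm f}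

/-- The `ω`-degree `⟨ω,α⟩` of a monomial exponent `α`. -/
noncomputable def wdeg (ω : Fin n → ℝ) (α : Fin n →₀ ℕ) : ℝ := ∑ i, ω i * (α i : ℝ)

/-- The initial form `in_ω(f)`: the sum of the terms of `f` whose exponents
maximize `⟨ω,·⟩`. -/
noncomputable def initialForm (ω : Fin n → ℝ) (f : MvPolynomial (Fin n) k) :
    MvPolynomial (Fin n) k :=
  letI : DecidablePred fun α : Fin n →₀ ℕ => ∀ β ∈ f.support, wdeg ω β ≤ wdeg ω α :=
    Classical.decPred _
  ∑ α ∈ f.support.filter (fun α => ∀ β ∈ f.support, wdeg ω β ≤ wdeg ω α),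
    monomial α (f.coeff α)

/-- The initial ideal `in_ω(I) = ⟨in_ω(f) : f ∈ I⟩`. -/
noncomputable def initialFormIdeal (ω : Fin n → ℝ) (I : Ideal (MvPolynomial (Fin n) k)) :
    Ideal (MvPolynomial (Fin n) k) :=
  Ideal.span {p | ∃ f ∈ I, p = initialForm ω f}

/-- `C_≺(I)`: the closure of `{u : in_u(I) = in_≺(I)}` in `ℝ^n`. -/
noncomputable def Cprec (τ : TermOrder n) (I : Ideal (MvPolynomial (Fin n) k)) :
    Set (Fin n → ℝ) :=
  closure {u : Fin n → ℝ | initialFormIdeal u I = τ.initialIdeal I}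

/-- `C_v(I)`: the closure of the equivalence class `{u : in_u(I) = in_v(I)}`. -/
noncomputable def Cv (I : Ideal (MvPolynomial (Fin n) k)) (v : Fin n → ℝ) :
    Set (Fin n → ℝ) :=
  closure {u : Fin n → ℝ | initialFormIdeal u I = initialFormIdeal v I}

/-- `F` is a face of `C`: either empty or the set of maximizers over `C` of a
linear functional. -/
def IsFaceOf (C F : Set (Fin n → ℝ)) : Prop :=
  F = ∅ ∨ ∃ w : Fin n → ℝ, F = {x ∈ C | ∀ y ∈ C, ∑ i, w i * y i ≤ ∑ i, w i * x i}

/-- The Gröbner fan of `I`: all nonempty faces of the cones `C_v(I)`, `v ∈ ℝ^n_{>0}`. -/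
noncomputable def GroebnerFan (I : Ideal (MvPolynomial (Fin n) k)) :
    Set (Set (Fin n → ℝ)) :=
  {F | F.Nonempty ∧ ∃ v : Fin n → ℝ, (∀ i, 0 < v i) ∧ IsFaceOf (Cv I v) F}

/-- `G` is a (finite) Gröbner basis of `I` w.r.t. `τ`. -/
def IsGroebnerBasis (τ : TermOrder n) (I : Ideal (MvPolynomial (Fin n) k))
    (G : Set (MvPolynomial (Fin n) k)) : Prop :=
  G.Finite ∧ Ideal.span G = I ∧ τ.initialIdeal I = Ideal.span (τ.initialTerm '' G)

/-- `G` is the reduced Gröbner basis of `I` w.r.t. `τ`. -/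
def IsReducedGroebnerBasis (τ : TermOrder n) (I : Ideal (MvPolynomial (Fin n) k))
    (G : Set (MvPolynomial (Fin n) k)) : Prop :=
  IsGroebnerBasis τ I G ∧
  (∀ g ∈ G, g.coeff (τ.leadExp g) = 1) ∧
  (∀ g ∈ G, ∀ α ∈ g.support, α ≠ τ.leadExp g →
    (monomial α 1 : MvPolynomial (Fin n) k) ∉ τ.initialIdeal I) ∧
  (∀ g ∈ G, Ideal.span (τ.initialTerm '' (G \ {g})) ≠ τ.initialIdeal I)

/-!
If `in_w(I) = in_≺(I)`, then `in_w(g)` lies in the monomial ideal `in_≺(I)` while the non-leading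
monomials of a reduced `g` do not, so the `≺`-leading exponent of each `g ∈ G` has maximal
`w`-weight in `g`; this is a closed condition on `w`, so it holds on all of `C_≺(I)`. For any such
`w`, dividing `f ∈ I` by `G` and watching the top `w`-weight shows `in_w(f) ∈ ⟨in_w(G)⟩` and that
the leading exponent of `in_w(f)` lies in `in_≺(I)`; lifting weighted components of elements of
`in_w(I)` back to `I` extends the latter to all of `in_w(I)`. Hence `in_w(I) = ⟨in_w(g) : g ∈ G⟩`,
which gives `⇐`. For `⇒`, `in_u(g) - in_v(g) ∈ in_v(I)` is supported on non-leading monomials of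
`g`, none of which lies in `in_≺(I)`, so it vanishes.
-/

namespace TermOrder

variable (τ : TermOrder n)

theorem lt_asymm {a b : Fin n →₀ ℕ} (h : τ.lt a b) : ¬ τ.lt b a :=
  fun h' => τ.irrefl a (τ.trans _ _ _ h h')

theorem add_left {a b : Fin n →₀ ℕ} (c : Fin n →₀ ℕ) (h : τ.lt a b) : τ.lt (c + a) (c + b) := by
  simpa only [add_comm c] using τ.add_right a b c h

theorem lt_of_le_of_ne {a b : Fin n →₀ ℕ} (h : a ≤ b) (hne : a ≠ b) : τ.lt a b := by
  obtain ⟨c, rfl⟩ := le_iff_exists_add.mp h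
  simpa using τ.add_left a (τ.zero_lt c (by rintro rfl; simp at hne))

-- Dickson's lemma: an infinite descending chain would contain `a i ≤ a j` with `i < j`.
theorem wellFounded : WellFounded τ.lt := by
  have : IsStrictOrder _ τ.lt := { irrefl := τ.irrefl, trans := τ.trans }
  refine RelEmbedding.wellFounded_iff_isEmpty.mpr ⟨fun a => ?_⟩
  obtain ⟨i, j, hij, hle⟩ := wellQuasiOrdered_le (α := Fin n →₀ ℕ) (fun m => a m)
  have hlt : τ.lt (a j) (a i) := a.map_rel_iff.mpr hij
  rcases eq_or_ne (a i) (a j) with he | hne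
  · exact τ.irrefl _ (he ▸ hlt)
  · exact τ.lt_asymm (τ.lt_of_le_of_ne hle hne) hlt

theorem exists_forall_lt (s : Finset (Fin n →₀ ℕ)) (hs : s.Nonempty) :
    ∃ a ∈ s, ∀ b ∈ s, b ≠ a → τ.lt b a := by
  have : IsTrans s (fun a b => τ.lt b a) := ⟨fun a b c h₁ h₂ => τ.trans _ _ _ h₂ h₁⟩
  have : Std.Irrefl (fun a b : s => τ.lt b a) := ⟨fun a => τ.irrefl a⟩
  obtain ⟨a, -, ha⟩ := (Finite.wellFounded_of_trans_of_irrefl (fun a b : s => τ.lt b a)).has_min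
    Set.univ ⟨⟨_, hs.choose_spec⟩, trivial⟩
  exact ⟨a, a.2, fun b hb hne => (τ.total b a hne).resolve_right fun h => ha ⟨b, hb⟩ trivial h⟩

theorem leadExp_spec {f : MvPolynomial (Fin n) k} (hf : f ≠ 0) :
    τ.leadExp f ∈ f.support ∧ ∀ β ∈ f.support, β ≠ τ.leadExp f → τ.lt β (τ.leadExp f) := by
  have hex := τ.exists_forall_lt f.support (support_nonempty.mpr hf)
  rw [leadExp, dif_pos hex]
  exact hex.choose_spec

theorem leadExp_mem_support {f : MvPolynomial (Fin n) k} (hf : f ≠ 0) :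
    τ.leadExp f ∈ f.support :=
  (τ.leadExp_spec hf).1

theorem lt_leadExp {f : MvPolynomial (Fin n) k} (hf : f ≠ 0) {β : Fin n →₀ ℕ}
    (hβ : β ∈ f.support) (hne : β ≠ τ.leadExp f) : τ.lt β (τ.leadExp f) :=
  (τ.leadExp_spec hf).2 β hβ hne

theorem leadExp_eq_of_forall_lt {f : MvPolynomial (Fin n) k} {α : Fin n →₀ ℕ}
    (hα : α ∈ f.support) (h : ∀ β ∈ f.support, β ≠ α → τ.lt β α) : τ.leadExp f = α := by
  have hf : f ≠ 0 := by rintro rfl; simp at hα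
  by_contra hne
  exact τ.lt_asymm (h _ (τ.leadExp_mem_support hf) hne) (τ.lt_leadExp hf hα (Ne.symm hne))

theorem leadExp_eq_of_support_subset {f g : MvPolynomial (Fin n) k} (hfg : g.support ⊆ f.support)
    (hg : τ.leadExp f ∈ g.support) : τ.leadExp g = τ.leadExp f :=
  have hf : f ≠ 0 := by rintro rfl; simpa using hfg hg
  τ.leadExp_eq_of_forall_lt hg fun _ hβ hne => τ.lt_leadExp hf (hfg hβ) hne

theorem leadExp_induction {P : MvPolynomial (Fin n) k → Prop} (f : MvPolynomial (Fin n) k)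
    (step : ∀ f, (∀ f', τ.lt (τ.leadExp f') (τ.leadExp f) → P f') → P f) : P f :=
  (InvImage.wf τ.leadExp τ.wellFounded).induction f step

end TermOrder

open Finsupp (weight)

namespace MvPolynomial

variable {σ R : Type*} [CommSemiring R]

theorem ne_zero_of_coeff_eq_one [Nontrivial R] {p : MvPolynomial σ R} {α : σ →₀ ℕ}
    (h : p.coeff α = 1) : p ≠ 0 :=
  ne_zero_iff.mpr ⟨α, h ▸ one_ne_zero⟩

theorem exists_eq_add_of_mem_support_monomial_mul {δ β : σ →₀ ℕ} {c : R}
    {p : MvPolynomial σ R} (hβ : β ∈ (monomial δ c * p).support) :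
    ∃ γ ∈ p.support, β = δ + γ := by
  rw [mem_support_iff, coeff_monomial_mul'] at hβ
  split_ifs at hβ with h
  · exact ⟨β - δ, mem_support_iff.mpr (right_ne_zero_of_mul hβ), (add_tsub_cancel_of_le h).symm⟩
  · exact absurd rfl hβ

theorem weightedHomogeneousComponent_monomial_mul {M : Type*} [AddCommGroup M] (w : σ → M)
    (d : M) (δ : σ →₀ ℕ) (c : R) (p : MvPolynomial σ R) :
    weightedHomogeneousComponent w d (monomial δ c * p) =
      monomial δ c * weightedHomogeneousComponent w (d - weight w δ) p := by
  classical
  ext β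
  simp only [coeff_weightedHomogeneousComponent, coeff_monomial_mul']
  by_cases h : δ ≤ β
  · have hβ : weight w β = weight w δ + weight w (β - δ) := by
      rw [← map_add, add_tsub_cancel_of_le h]
    simp only [if_pos h, hβ, eq_sub_iff_add_eq']
    split_ifs <;> simp
  · simp [if_neg h]

end MvPolynomial

section InitialForm

variable (w : Fin n → ℝ)

theorem wdeg_eq_weight (α : Fin n →₀ ℕ) : wdeg w α = weight w α := by
  simp [wdeg, Finsupp.weight_apply, Finsupp.sum_fintype, mul_comm]

theorem coeff_initialForm (f : MvPolynomial (Fin n) k) (β : Fin n →₀ ℕ) :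
    coeff β (initialForm w f) =
      if β ∈ f.support ∧ ∀ γ ∈ f.support, weight w γ ≤ weight w β then coeff β f else 0 := by
  classical
  simp only [initialForm, coeff_sum, coeff_monomial, Finset.sum_ite_eq', Finset.mem_filter,
    wdeg_eq_weight]

variable {w}

theorem mem_support_initialForm {f : MvPolynomial (Fin n) k} {β : Fin n →₀ ℕ} :
    β ∈ (initialForm w f).support ↔ β ∈ f.support ∧ ∀ γ ∈ f.support, weight w γ ≤ weight w β := by
  rw [mem_support_iff, coeff_initialForm]
  split_ifs with h
  · exact ⟨fun _ => h, fun h' => mem_support_iff.mp h'.1⟩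
  · exact ⟨fun h' => absurd rfl h', fun h' => absurd h' h⟩

theorem support_initialForm_subset (f : MvPolynomial (Fin n) k) :
    (initialForm w f).support ⊆ f.support :=
  fun _ hβ => (mem_support_initialForm.mp hβ).1

@[simp]
theorem initialForm_zero : initialForm w (0 : MvPolynomial (Fin n) k) = 0 := by
  simp [initialForm]

theorem initialForm_ne_zero {f : MvPolynomial (Fin n) k} (hf : f ≠ 0) : initialForm w f ≠ 0 := by
  obtain ⟨β, hβ, hmax⟩ := f.support.exists_max_image (weight w) (support_nonempty.mpr hf)
  intro h
  simpa [h] using mem_support_initialForm.mpr ⟨hβ, hmax⟩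

theorem initialForm_eq_weightedHomogeneousComponent {f : MvPolynomial (Fin n) k}
    {μ : Fin n →₀ ℕ} (hμ : μ ∈ f.support) (hmax : ∀ γ ∈ f.support, weight w γ ≤ weight w μ) :
    initialForm w f = weightedHomogeneousComponent w (weight w μ) f := by
  classical
  ext β
  rw [coeff_initialForm, coeff_weightedHomogeneousComponent]
  by_cases hβ : β ∈ f.support
  · refine if_congr ⟨fun h => le_antisymm (hmax β hβ) (h.2 μ hμ), fun h => ⟨hβ, ?_⟩⟩ rfl rfl
    exact fun γ hγ => h ▸ hmax γ hγ
  · simp [notMem_support_iff.mp hβ]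

theorem weightedHomogeneousComponent_eq_zero_or_initialForm {f : MvPolynomial (Fin n) k} {d : ℝ}
    (hd : ∀ β ∈ f.support, weight w β ≤ d) :
    weightedHomogeneousComponent w d f = 0 ∨
      weightedHomogeneousComponent w d f = initialForm w f := by
  classical
  refine or_iff_not_imp_left.mpr fun hne => ?_
  obtain ⟨μ, hμ⟩ := support_nonempty.mpr hne
  rw [support_weightedHomogeneousComponent, Finset.mem_filter] at hμ
  rw [initialForm_eq_weightedHomogeneousComponent hμ.1 (hμ.2 ▸ hd), hμ.2]

theorem coeff_initialForm_of_mem_support {w : Fin n → ℝ} {f : MvPolynomial (Fin n) k}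
    {β : Fin n →₀ ℕ} (h : β ∈ (initialForm w f).support) :
    coeff β (initialForm w f) = coeff β f := by
  rw [coeff_initialForm, if_pos (mem_support_initialForm.mp h)]

theorem exists_mem_weightedHomogeneousComponent_eq {w : Fin n → ℝ}
    {I : Ideal (MvPolynomial (Fin n) k)} {h : MvPolynomial (Fin n) k}
    (hh : h ∈ initialFormIdeal w I) (d : ℝ) :
    ∃ f ∈ I, (∀ β ∈ f.support, weight w β ≤ d) ∧
      weightedHomogeneousComponent w d f = weightedHomogeneousComponent w d h := by
  classical
  induction hh using Submodule.span_induction generalizing d with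
  | mem x hx =>
    obtain ⟨f, hf, rfl⟩ := hx
    rcases eq_or_ne f 0 with rfl | hf0
    · exact ⟨0, zero_mem _, by simp, by simp⟩
    obtain ⟨μ, hμ, hmax⟩ := f.support.exists_max_image (weight w) (support_nonempty.mpr hf0)
    have hhom := weightedHomogeneousComponent_isWeightedHomogeneous (w := w) (weight w μ) f
    rw [initialForm_eq_weightedHomogeneousComponent hμ hmax]
    by_cases hd : weight w μ = d
    · exact ⟨f, hf, hd ▸ hmax, hd ▸ hhom.weightedHomogeneousComponent_same.symm⟩
    · exact ⟨0, zero_mem _, by simp, by rw [map_zero, hhom.weightedHomogeneousComponent_ne d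
        (Ne.symm hd)]⟩
  | zero => exact ⟨0, zero_mem _, by simp, by simp⟩
  | add x y _ _ hx hy =>
    obtain ⟨f₁, hf₁, hd₁, he₁⟩ := hx d
    obtain ⟨f₂, hf₂, hd₂, he₂⟩ := hy d
    exact ⟨f₁ + f₂, add_mem hf₁ hf₂,
      fun β hβ => (Finset.mem_union.mp (support_add hβ)).elim (hd₁ β) (hd₂ β),
      by rw [map_add, map_add, he₁, he₂]⟩
  | smul r x _ hx =>
    rw [smul_eq_mul]
    induction r using MvPolynomial.induction_on' with
    | monomial δ c =>
      obtain ⟨f, hf, hfd, he⟩ := hx (d - weight w δ)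
      refine ⟨monomial δ c * f, I.mul_mem_left _ hf, fun β hβ => ?_, by
        rw [weightedHomogeneousComponent_monomial_mul, weightedHomogeneousComponent_monomial_mul,
          he]⟩
      obtain ⟨γ, hγ, rfl⟩ := exists_eq_add_of_mem_support_monomial_mul hβ
      rw [map_add]
      linarith [hfd γ hγ]
    | add p q hp hq =>
      obtain ⟨f₁, hf₁, hd₁, he₁⟩ := hp
      obtain ⟨f₂, hf₂, hd₂, he₂⟩ := hq
      exact ⟨f₁ + f₂, add_mem hf₁ hf₂,
        fun β hβ => (Finset.mem_union.mp (support_add hβ)).elim (hd₁ β) (hd₂ β),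
        by rw [add_mul, map_add, map_add, he₁, he₂]⟩

end InitialForm

def IsWeightCompatible (τ : TermOrder n) (w : Fin n → ℝ) (G : Set (MvPolynomial (Fin n) k)) :
    Prop :=
  ∀ g ∈ G, ∀ β ∈ g.support, weight w β ≤ weight w (τ.leadExp g)

section Groebner

variable {τ : TermOrder n} {I : Ideal (MvPolynomial (Fin n) k)} {G : Set (MvPolynomial (Fin n) k)}
  {w : Fin n → ℝ}

theorem isWeightCompatible_iff (hG : ∀ g ∈ G, g ≠ 0) :
    IsWeightCompatible τ w G ↔ ∀ g ∈ G, τ.leadExp g ∈ (initialForm w g).support := by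
  simp only [mem_support_initialForm]
  exact forall₂_congr fun g hg => (and_iff_right (τ.leadExp_mem_support (hG g hg))).symm

theorem span_initialTerm_eq (hmonic : ∀ g ∈ G, g.coeff (τ.leadExp g) = 1) :
    Ideal.span (τ.initialTerm '' G) = Ideal.span ((monomial · (1 : k)) '' (τ.leadExp '' G)) := by
  rw [Set.image_image]
  exact congrArg _ (Set.image_congr fun g hg => by rw [TermOrder.initialTerm, hmonic g hg])

namespace IsGroebnerBasis

theorem subset (hG : IsGroebnerBasis τ I G) : G ⊆ I :=
  hG.2.1 ▸ Ideal.subset_span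

theorem mem_initialIdeal_iff (hG : IsGroebnerBasis τ I G)
    (hmonic : ∀ g ∈ G, g.coeff (τ.leadExp g) = 1) {p : MvPolynomial (Fin n) k} :
    p ∈ τ.initialIdeal I ↔ ∀ α ∈ p.support, ∃ g ∈ G, τ.leadExp g ≤ α := by
  simp only [hG.2.2, span_initialTerm_eq hmonic, mem_ideal_span_monomial_image,
    Set.exists_mem_image]

theorem monomial_mem_initialIdeal_iff (hG : IsGroebnerBasis τ I G)
    (hmonic : ∀ g ∈ G, g.coeff (τ.leadExp g) = 1) {α : Fin n →₀ ℕ} :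
    monomial α (1 : k) ∈ τ.initialIdeal I ↔ ∃ g ∈ G, τ.leadExp g ≤ α := by
  simp [hG.mem_initialIdeal_iff hmonic]

theorem exists_reduction (hG : IsGroebnerBasis τ I G)
    (hmonic : ∀ g ∈ G, g.coeff (τ.leadExp g) = 1) {f : MvPolynomial (Fin n) k} (hf : f ∈ I)
    (hf0 : f ≠ 0) :
    ∃ g ∈ G, ∃ δ, δ + τ.leadExp g = τ.leadExp f ∧
      ∀ β ∈ (f - monomial δ (f.coeff (τ.leadExp f)) * g).support, τ.lt β (τ.leadExp f) := by
  classical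
  have hlead := τ.leadExp_mem_support hf0
  have hin : τ.initialTerm f ∈ τ.initialIdeal I := Ideal.subset_span ⟨f, hf, hf0, rfl⟩
  obtain ⟨g, hg, hle⟩ := (hG.mem_initialIdeal_iff hmonic).mp hin (τ.leadExp f)
    (by simp [TermOrder.initialTerm, support_monomial, mem_support_iff.mp hlead])
  have hg0 : g ≠ 0 := ne_zero_of_coeff_eq_one (hmonic g hg)
  obtain ⟨δ, hδ⟩ : ∃ δ, δ + τ.leadExp g = τ.leadExp f :=
    ⟨_, tsub_add_cancel_of_le hle⟩
  refine ⟨g, hg, δ, hδ, fun β hβ => ?_⟩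
  have hne : β ≠ τ.leadExp f := by
    rintro rfl
    simp [coeff_monomial_mul', ← hδ, hmonic g hg] at hβ
  rcases Finset.mem_union.mp (support_sub _ _ _ hβ) with hβf | hβg
  · exact τ.lt_leadExp hf0 hβf hne
  · obtain ⟨γ, hγ, rfl⟩ := exists_eq_add_of_mem_support_monomial_mul hβg
    rw [← hδ] at hne ⊢
    exact τ.add_left δ (τ.lt_leadExp hg0 hγ fun h => hne (h ▸ rfl))

-- Cancelling `in_≺(f)` by `c x^δ g`, the term `c x^δ in_w(g)` survives in `in_w(f)` exactly when
-- `in_≺(f)` has top `w`-weight.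
theorem initialForm_reduction (hG : IsGroebnerBasis τ I G)
    (hmonic : ∀ g ∈ G, g.coeff (τ.leadExp g) = 1) (hw : IsWeightCompatible τ w G)
    {f : MvPolynomial (Fin n) k} (hf : f ∈ I) (hf0 : f ≠ 0) :
    let S := insert 0 (initialForm w '' {f' | f' ∈ I ∧ τ.lt (τ.leadExp f') (τ.leadExp f)})
    (∃ g ∈ G, τ.leadExp g ≤ τ.leadExp (initialForm w f) ∧
        ∃ q, initialForm w f - q * initialForm w g ∈ S) ∨ initialForm w f ∈ S := by
  classical
  intro S
  obtain ⟨g, hg, δ, hδ, hlt⟩ := hG.exists_reduction hmonic hf hf0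
  set c := f.coeff (τ.leadExp f)
  set f' := f - monomial δ c * g with hf'
  have hg0 : g ≠ 0 := ne_zero_of_coeff_eq_one (hmonic g hg)
  obtain ⟨μ, hμ, hmax⟩ := f.support.exists_max_image (weight w) (support_nonempty.mpr hf0)
  set d := weight w μ
  have hleadw : weight w (τ.leadExp g) ≤ d - weight w δ := by
    have := hmax _ (τ.leadExp_mem_support hf0)
    rw [← hδ, map_add] at this
    linarith
  have hf'w : ∀ β ∈ f'.support, weight w β ≤ d := by
    intro β hβ
    rcases Finset.mem_union.mp (support_sub _ _ _ hβ) with hβf | hβg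
    · exact hmax β hβf
    · obtain ⟨γ, hγ, rfl⟩ := exists_eq_add_of_mem_support_monomial_mul hβg
      rw [map_add]
      linarith [hw g hg γ hγ]
  have hf'S : weightedHomogeneousComponent w d f' ∈ S := by
    rcases eq_or_ne f' 0 with h0 | h0
    · simp [h0, S]
    rcases weightedHomogeneousComponent_eq_zero_or_initialForm hf'w with h | h
    · exact h ▸ Set.mem_insert _ _
    · refine h ▸ Set.mem_insert_of_mem _ ⟨f', ⟨?_, hlt _ (τ.leadExp_mem_support h0)⟩, rfl⟩
      exact I.sub_mem hf (I.mul_mem_left _ (hG.subset hg))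
  have hdecomp : initialForm w f = weightedHomogeneousComponent w d f' +
      monomial δ c * weightedHomogeneousComponent w (d - weight w δ) g := by
    rw [initialForm_eq_weightedHomogeneousComponent hμ hmax,
      ← weightedHomogeneousComponent_monomial_mul, ← map_add, hf', sub_add_cancel]
  by_cases htop : weight w (τ.leadExp g) = d - weight w δ
  · have hmaxf : ∀ γ ∈ f.support, weight w γ ≤ weight w (τ.leadExp f) := by
      rwa [← hδ, map_add, htop, add_sub_cancel]
    have hlead : τ.leadExp (initialForm w f) = τ.leadExp f :=
      τ.leadExp_eq_of_support_subset (support_initialForm_subset f)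
        (mem_support_initialForm.mpr ⟨τ.leadExp_mem_support hf0, hmaxf⟩)
    refine Or.inl ⟨g, hg, hlead ▸ hδ ▸ le_add_self, monomial δ c, ?_⟩
    rwa [hdecomp, ← htop, ← initialForm_eq_weightedHomogeneousComponent
      (τ.leadExp_mem_support hg0) (hw g hg), add_sub_cancel_right]
  · have hcomp : weightedHomogeneousComponent w (d - weight w δ) g = 0 :=
      weightedHomogeneousComponent_eq_zero' _ _ fun β hβ =>
        ((hw g hg β hβ).trans_lt (lt_of_le_of_ne hleadw htop)).ne
    exact Or.inr (by rwa [hdecomp, hcomp, mul_zero, add_zero])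

theorem initialForm_mem_span (hG : IsGroebnerBasis τ I G)
    (hmonic : ∀ g ∈ G, g.coeff (τ.leadExp g) = 1) (hw : IsWeightCompatible τ w G)
    {f : MvPolynomial (Fin n) k} (hf : f ∈ I) :
    initialForm w f ∈ Ideal.span (initialForm w '' G) := by
  induction f using τ.leadExp_induction with
  | step f ih =>
  rcases eq_or_ne f 0 with rfl | hf0
  · simp
  have hS : ∀ p ∈ insert 0 (initialForm w '' {f' | f' ∈ I ∧ τ.lt (τ.leadExp f') (τ.leadExp f)}),
      p ∈ Ideal.span (initialForm w '' G) := by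
    rintro p (rfl | ⟨f', ⟨hf'I, hlt⟩, rfl⟩)
    exacts [zero_mem _, ih f' hlt hf'I]
  rcases hG.initialForm_reduction hmonic hw hf hf0 with ⟨g, hg, -, q, hq⟩ | h
  · rw [← sub_add_cancel (initialForm w f) (q * initialForm w g)]
    exact add_mem (hS _ hq) (Ideal.mul_mem_left _ _ (Ideal.subset_span ⟨g, hg, rfl⟩))
  · exact hS _ h

theorem exists_leadExp_le_leadExp_initialForm (hG : IsGroebnerBasis τ I G)
    (hmonic : ∀ g ∈ G, g.coeff (τ.leadExp g) = 1) (hw : IsWeightCompatible τ w G)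
    {f : MvPolynomial (Fin n) k} (hf : f ∈ I) (hf0 : f ≠ 0) :
    ∃ g ∈ G, τ.leadExp g ≤ τ.leadExp (initialForm w f) := by
  induction f using τ.leadExp_induction with
  | step f ih =>
  rcases hG.initialForm_reduction hmonic hw hf hf0 with ⟨g, hg, hle, -⟩ | h
  · exact ⟨g, hg, hle⟩
  · rcases h with h | ⟨f', ⟨hf'I, hlt⟩, h⟩
    · exact absurd h (initialForm_ne_zero hf0)
    · have hf'0 : f' ≠ 0 := by
        rintro rfl
        exact initialForm_ne_zero hf0 (by rw [← h, initialForm_zero])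
      exact h ▸ ih f' hlt hf'I hf'0

theorem initialFormIdeal_eq_span (hG : IsGroebnerBasis τ I G)
    (hmonic : ∀ g ∈ G, g.coeff (τ.leadExp g) = 1) (hw : IsWeightCompatible τ w G) :
    initialFormIdeal w I = Ideal.span (initialForm w '' G) := by
  refine le_antisymm (Ideal.span_le.mpr ?_) (Ideal.span_le.mpr ?_)
  · rintro _ ⟨f, hf, rfl⟩
    exact hG.initialForm_mem_span hmonic hw hf
  · rintro _ ⟨g, hg, rfl⟩
    exact Ideal.subset_span ⟨g, hG.subset hg, rfl⟩

theorem exists_leadExp_le_of_mem_initialFormIdeal (hG : IsGroebnerBasis τ I G)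
    (hmonic : ∀ g ∈ G, g.coeff (τ.leadExp g) = 1) (hw : IsWeightCompatible τ w G)
    {h : MvPolynomial (Fin n) k} (hh : h ∈ initialFormIdeal w I) (h0 : h ≠ 0) :
    ∃ g ∈ G, τ.leadExp g ≤ τ.leadExp h := by
  classical
  set d := weight w (τ.leadExp h)
  obtain ⟨f, hf, hfd, hfh⟩ := exists_mem_weightedHomogeneousComponent_eq hh d
  have hsub : (weightedHomogeneousComponent w d h).support ⊆ h.support := by
    rw [support_weightedHomogeneousComponent]
    exact Finset.filter_subset _ _
  have hmem : τ.leadExp h ∈ (weightedHomogeneousComponent w d h).support := by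
    rw [support_weightedHomogeneousComponent, Finset.mem_filter]
    exact ⟨τ.leadExp_mem_support h0, rfl⟩
  have hne : weightedHomogeneousComponent w d f ≠ 0 := by
    rw [hfh]
    exact ne_zero_iff.mpr ⟨_, mem_support_iff.mp hmem⟩
  have hinit : initialForm w f = weightedHomogeneousComponent w d h :=
    hfh ▸ ((weightedHomogeneousComponent_eq_zero_or_initialForm hfd).resolve_left hne).symm
  have hf0 : f ≠ 0 := by rintro rfl; exact hne (map_zero _)
  obtain ⟨g, hg, hle⟩ := hG.exists_leadExp_le_leadExp_initialForm hmonic hw hf hf0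
  exact ⟨g, hg, by rwa [hinit, τ.leadExp_eq_of_support_subset hsub hmem] at hle⟩

end IsGroebnerBasis

namespace IsReducedGroebnerBasis

theorem ne_zero (hG : IsReducedGroebnerBasis τ I G) {g : MvPolynomial (Fin n) k} (hg : g ∈ G) :
    g ≠ 0 :=
  ne_zero_of_coeff_eq_one (hG.2.1 g hg)

theorem eq_leadExp_of_leadExp_le (hG : IsReducedGroebnerBasis τ I G)
    {g g' : MvPolynomial (Fin n) k} (hg : g ∈ G) (hg' : g' ∈ G) {α : Fin n →₀ ℕ}
    (hα : α ∈ g.support) (hle : τ.leadExp g' ≤ α) : α = τ.leadExp g := by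
  by_contra hne
  exact hG.2.2.1 g hg α hα hne ((hG.1.monomial_mem_initialIdeal_iff hG.2.1).mpr ⟨g', hg', hle⟩)

theorem isWeightCompatible_of_initialFormIdeal_eq (hG : IsReducedGroebnerBasis τ I G)
    (hw : initialFormIdeal w I = τ.initialIdeal I) : IsWeightCompatible τ w G := by
  refine (isWeightCompatible_iff fun _ => hG.ne_zero).mpr fun g hg => ?_
  have hmem : initialForm w g ∈ τ.initialIdeal I :=
    hw ▸ Ideal.subset_span ⟨g, hG.1.subset hg, rfl⟩
  obtain ⟨α, hα⟩ := support_nonempty.mpr (initialForm_ne_zero (w := w) (hG.ne_zero hg))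
  obtain ⟨g', hg', hle⟩ := (hG.1.mem_initialIdeal_iff hG.2.1).mp hmem α hα
  exact hG.eq_leadExp_of_leadExp_le hg hg' (support_initialForm_subset g hα) hle ▸ hα

theorem isWeightCompatible_of_mem_Cprec (hG : IsReducedGroebnerBasis τ I G)
    (hw : w ∈ Cprec τ I) : IsWeightCompatible τ w G := by
  intro g hg β hβ
  have hcont : ∀ γ : Fin n →₀ ℕ, Continuous fun w : Fin n → ℝ => weight w γ := fun γ => by
    simp only [← wdeg_eq_weight, wdeg]
    fun_prop
  exact closure_minimal (fun u hu => hG.isWeightCompatible_of_initialFormIdeal_eq hu g hg β hβ)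
    (isClosed_le (hcont β) (hcont _)) hw

theorem leadExp_eq_of_mem_initialFormIdeal (hG : IsReducedGroebnerBasis τ I G)
    (hw : IsWeightCompatible τ w G) {h : MvPolynomial (Fin n) k} (hh : h ∈ initialFormIdeal w I)
    (h0 : h ≠ 0) {g : MvPolynomial (Fin n) k} (hg : g ∈ G) (hsub : τ.leadExp h ∈ g.support) :
    τ.leadExp h = τ.leadExp g := by
  obtain ⟨g', hg', hle⟩ := hG.1.exists_leadExp_le_of_mem_initialFormIdeal hG.2.1 hw hh h0
  exact hG.eq_leadExp_of_leadExp_le hg hg' hsub hle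

theorem initialForm_eq_of_mem_initialFormIdeal (hG : IsReducedGroebnerBasis τ I G)
    (hv : IsWeightCompatible τ w G) {u : Fin n → ℝ} {g : MvPolynomial (Fin n) k} (hg : g ∈ G)
    (hu : initialForm u g ∈ initialFormIdeal w I) : initialForm u g = initialForm w g := by
  classical
  have hu0 := initialForm_ne_zero (w := u) (hG.ne_zero hg)
  have hlu : τ.leadExp g ∈ (initialForm u g).support :=
    hG.leadExp_eq_of_mem_initialFormIdeal hv hu hu0 hg
      (support_initialForm_subset g (τ.leadExp_mem_support hu0)) ▸ τ.leadExp_mem_support hu0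
  have hlv : τ.leadExp g ∈ (initialForm w g).support :=
    (isWeightCompatible_iff fun _ => hG.ne_zero).mp hv g hg
  rw [← sub_eq_zero]
  by_contra hne
  have hD : initialForm u g - initialForm w g ∈ initialFormIdeal w I :=
    sub_mem hu (Ideal.subset_span ⟨g, hG.1.subset hg, rfl⟩)
  have hDg : (initialForm u g - initialForm w g).support ⊆ g.support := fun β hβ =>
    (Finset.mem_union.mp (support_sub _ _ _ hβ)).elim (support_initialForm_subset g ·)
      (support_initialForm_subset g ·)
  have hmem := τ.leadExp_mem_support hne
  rw [hG.leadExp_eq_of_mem_initialFormIdeal hv hD hne hg (hDg hmem), mem_support_iff, coeff_sub,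
    coeff_initialForm_of_mem_support hlu, coeff_initialForm_of_mem_support hlv, sub_self] at hmem
  exact hmem rfl

end IsReducedGroebnerBasis

end Groebner

/-- Let `v ∈ C_≺(I)`. Then for every `u ∈ ℝ^n`, `in_u(I) = in_v(I)` iff
`in_u(g) = in_v(g)` for every `g` in the reduced Gröbner basis `G_≺(I)`. -/
theorem initialFormIdeal_eq_iff_initialForms_eq (τ : TermOrder n)
    (I : Ideal (MvPolynomial (Fin n) k))
    (G : Set (MvPolynomial (Fin n) k)) (hG : IsReducedGroebnerBasis τ I G)
    (v : Fin n → ℝ) (hv : v ∈ Cprec τ I) (u : Fin n → ℝ) :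
    initialFormIdeal u I = initialFormIdeal v I ↔
      ∀ g ∈ G, initialForm u g = initialForm v g := by
  have hvG := hG.isWeightCompatible_of_mem_Cprec hv
  constructor
  · intro h g hg
    exact hG.initialForm_eq_of_mem_initialFormIdeal hvG hg
      (h ▸ Ideal.subset_span ⟨g, hG.1.subset hg, rfl⟩)
  · intro h
    have hG0 : ∀ g ∈ G, g ≠ 0 := fun _ => hG.ne_zero
    have huG : IsWeightCompatible τ u G :=
      (isWeightCompatible_iff hG0).mpr fun g hg => h g hg ▸ (isWeightCompatible_iff hG0).mp hvG g hg
    rw [hG.1.initialFormIdeal_eq_span hG.2.1 huG, hG.1.initialFormIdeal_eq_span hG.2.1 hvG,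
      Set.image_congr h]
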